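/- arXiv:2504.14127 — 3 statements merged into one kernel-verified Lean document; each statement's English description precedes it below -/
import Mathlib

section
/- IV decomposition (finite population): Suppose no defiers (Tᵢ ≠ d for all i) and relevance (X̄_{z=1} ≠ X̄_{z=0}). Then the Wald ratio satisfies (Ȳ_{z=1} − Ȳ_{z=0})/(X̄_{z=1} − X̄_{z=0}) = (Ū_{z=1} − Ū_{z=0})/(X̄_{z=1} − X̄_{z=0}) + (T̄₁(a)β̄₁(a) − T̄₀(a)β̄₀(a))/(X̄_{z=1} − X̄_{z=0}) + [T̄₁(c)/((T̄₁(a) − T̄₀(a)) + T̄₁(c))]·β̄₁(c), and moreover X̄_{z=1} − X̄_{z=0} = (T̄₁(a) − T̄₀(a)) + T̄₁(c). -/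
open Finset

def grp (N : ℕ) (Z : Fin N → Bool) (b : Bool) : Finset (Fin N) :=
  Finset.univ.filter (fun i => Z i = b)

noncomputable def gmean (N : ℕ) (Z : Fin N → Bool) (b : Bool) (A : Fin N → ℝ) : ℝ :=
  (∑ i ∈ grp N Z b, A i) / ((grp N Z b).card : ℝ)

/-- Realized treatment: `X i = X1 i` if `Z i = true`, else `X0 i`. -/
def Xr (N : ℕ) (Z X1 X0 : Fin N → Bool) : Fin N → Bool :=
  fun i => if Z i then X1 i else X0 i

/-- Realized outcome `Y i = β i · X i + U i`. -/
noncomputable def Yr (N : ℕ) (Z X1 X0 : Fin N → Bool) (β U : Fin N → ℝ) : Fin N → ℝ :=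
  fun i => β i * (if Xr N Z X1 X0 i then 1 else 0) + U i

/-- Mean of realized treatment in instrument group `z`. -/
noncomputable def Xbar (N : ℕ) (Z X1 X0 : Fin N → Bool) (z : Bool) : ℝ :=
  gmean N Z z (fun i => if Xr N Z X1 X0 i then 1 else 0)

/-- Units of instrument group `z` that are always takers. -/
def grpA (N : ℕ) (Z X1 X0 : Fin N → Bool) (z : Bool) : Finset (Fin N) :=
  (grp N Z z).filter (fun i => X1 i = true ∧ X0 i = true)

/-- Units of instrument group `z` that are compliers. -/
def grpC (N : ℕ) (Z X1 X0 : Fin N → Bool) (z : Bool) : Finset (Fin N) :=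
  (grp N Z z).filter (fun i => X1 i = true ∧ X0 i = false)

/-- Fraction of always takers in instrument group `z`. -/
noncomputable def TbarA (N : ℕ) (Z X1 X0 : Fin N → Bool) (z : Bool) : ℝ :=
  ((grpA N Z X1 X0 z).card : ℝ) / ((grp N Z z).card : ℝ)

/-- Fraction of compliers in instrument group `z`. -/
noncomputable def TbarC (N : ℕ) (Z X1 X0 : Fin N → Bool) (z : Bool) : ℝ :=
  ((grpC N Z X1 X0 z).card : ℝ) / ((grp N Z z).card : ℝ)

/-- `T̄_z(a)·β̄_z(a)`, i.e. `(1/N_z) ∑_{i : Z i = z, always taker} β i`. -/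
noncomputable def TbetaA (N : ℕ) (Z X1 X0 : Fin N → Bool) (β : Fin N → ℝ) (z : Bool) : ℝ :=
  (∑ i ∈ grpA N Z X1 X0 z, β i) / ((grp N Z z).card : ℝ)

/-- Mean treatment effect among compliers in instrument group `z`. -/
noncomputable def betabarC (N : ℕ) (Z X1 X0 : Fin N → Bool) (β : Fin N → ℝ) (z : Bool) : ℝ :=
  (∑ i ∈ grpC N Z X1 X0 z, β i) / ((grpC N Z X1 X0 z).card : ℝ)

/-- finite-population IV decomposition of the Wald ratio under no defiers
and relevance. -/
theorem statement14
    (N : ℕ) (Z X1 X0 : Fin N → Bool) (β U : Fin N → ℝ)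
    (hN1 : 0 < (grp N Z true).card) (hN0 : 0 < (grp N Z false).card)
    (hnodef : ∀ i, ¬(X1 i = false ∧ X0 i = true))
    (hrel : Xbar N Z X1 X0 true ≠ Xbar N Z X1 X0 false) :
    (gmean N Z true (Yr N Z X1 X0 β U) - gmean N Z false (Yr N Z X1 X0 β U))
        / (Xbar N Z X1 X0 true - Xbar N Z X1 X0 false)
      = (gmean N Z true U - gmean N Z false U)
          / (Xbar N Z X1 X0 true - Xbar N Z X1 X0 false)
        + (TbetaA N Z X1 X0 β true - TbetaA N Z X1 X0 β false)
          / (Xbar N Z X1 X0 true - Xbar N Z X1 X0 false)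
        + (TbarC N Z X1 X0 true
            / ((TbarA N Z X1 X0 true - TbarA N Z X1 X0 false) + TbarC N Z X1 X0 true))
          * betabarC N Z X1 X0 β true
    ∧ Xbar N Z X1 X0 true - Xbar N Z X1 X0 false
      = (TbarA N Z X1 X0 true - TbarA N Z X1 X0 false) + TbarC N Z X1 X0 true := by
  classical
  -- abbreviations
  set S1 := grp N Z true with hS1
  set S0 := grp N Z false with hS0
  have hZ1 : ∀ i ∈ S1, Z i = true := fun i hi => by
    simpa [hS1, grp, Finset.mem_filter] using hi
  have hZ0 : ∀ i ∈ S0, Z i = false := fun i hi => by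
    simpa [hS0, grp, Finset.mem_filter] using hi
  -- filter decompositions
  have hunion : S1.filter (fun i => X1 i = true) = grpA N Z X1 X0 true ∪ grpC N Z X1 X0 true := by
    ext i
    simp only [grpA, grpC, ← hS1, Finset.mem_union, Finset.mem_filter]
    cases h0 : X0 i <;> tauto
  have hdisj : Disjoint (grpA N Z X1 X0 true) (grpC N Z X1 X0 true) := by
    rw [Finset.disjoint_left]
    intro i hi hi'
    simp only [grpA, grpC, Finset.mem_filter] at hi hi'
    simp [hi.2.2] at hi'
  have hfilt0 : S0.filter (fun i => X0 i = true) = grpA N Z X1 X0 false := by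
    ext i
    simp only [grpA, ← hS0, Finset.mem_filter]
    constructor
    · rintro ⟨hi, h0⟩
      refine ⟨hi, ?_, h0⟩
      have := hnodef i
      cases h1 : X1 i
      · exact absurd ⟨h1, h0⟩ this
      · rfl
    · rintro ⟨hi, _, h0⟩; exact ⟨hi, h0⟩
  -- indicator sums
  have hX1sum : ∑ i ∈ S1, (if Xr N Z X1 X0 i then (1:ℝ) else 0)
      = ((grpA N Z X1 X0 true).card : ℝ) + ((grpC N Z X1 X0 true).card : ℝ) := by
    rw [Finset.sum_congr rfl (fun i hi => by
      simp [Xr, hZ1 i hi] : ∀ i ∈ S1, (if Xr N Z X1 X0 i then (1:ℝ) else 0)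
        = (if X1 i = true then (1:ℝ) else 0))]
    rw [Finset.sum_boole, hunion, Finset.card_union_of_disjoint hdisj]
    push_cast; ring
  have hX0sum : ∑ i ∈ S0, (if Xr N Z X1 X0 i then (1:ℝ) else 0)
      = ((grpA N Z X1 X0 false).card : ℝ) := by
    rw [Finset.sum_congr rfl (fun i hi => by
      simp [Xr, hZ0 i hi] : ∀ i ∈ S0, (if Xr N Z X1 X0 i then (1:ℝ) else 0)
        = (if X0 i = true then (1:ℝ) else 0))]
    rw [Finset.sum_boole, hfilt0]
  -- second conjunct
  have hn1 : ((S1.card : ℝ)) ≠ 0 := by positivity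
  have hn0 : ((S0.card : ℝ)) ≠ 0 := by positivity
  have hXbar1 : Xbar N Z X1 X0 true = TbarA N Z X1 X0 true + TbarC N Z X1 X0 true := by
    rw [Xbar, gmean, TbarA, TbarC, ← hS1, hX1sum, add_div]
  have hXbar0 : Xbar N Z X1 X0 false = TbarA N Z X1 X0 false := by
    rw [Xbar, gmean, TbarA, ← hS0, hX0sum]
  have hconj2 : Xbar N Z X1 X0 true - Xbar N Z X1 X0 false
      = (TbarA N Z X1 X0 true - TbarA N Z X1 X0 false) + TbarC N Z X1 X0 true := by
    rw [hXbar1, hXbar0]; ring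
  -- Y sums
  have hY1 : ∑ i ∈ S1, Yr N Z X1 X0 β U i
      = (∑ i ∈ grpA N Z X1 X0 true, β i) + (∑ i ∈ grpC N Z X1 X0 true, β i)
        + ∑ i ∈ S1, U i := by
    have : ∀ i ∈ S1, Yr N Z X1 X0 β U i = (if X1 i = true then β i else 0) + U i := by
      intro i hi
      simp [Yr, Xr, hZ1 i hi, mul_ite]
    rw [Finset.sum_congr rfl this, Finset.sum_add_distrib, ← Finset.sum_filter,
      hunion, Finset.sum_union hdisj]
  have hY0 : ∑ i ∈ S0, Yr N Z X1 X0 β U i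
      = (∑ i ∈ grpA N Z X1 X0 false, β i) + ∑ i ∈ S0, U i := by
    have : ∀ i ∈ S0, Yr N Z X1 X0 β U i = (if X0 i = true then β i else 0) + U i := by
      intro i hi
      simp [Yr, Xr, hZ0 i hi, mul_ite]
    rw [Finset.sum_congr rfl this, Finset.sum_add_distrib, ← Finset.sum_filter, hfilt0]
  -- complier term
  have hCterm : (∑ i ∈ grpC N Z X1 X0 true, β i) / (S1.card : ℝ)
      = TbarC N Z X1 X0 true * betabarC N Z X1 X0 β true := by
    rw [TbarC, betabarC, ← hS1]
    rcases Nat.eq_zero_or_pos (grpC N Z X1 X0 true).card with hc | hc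
    · rw [Finset.card_eq_zero] at hc
      simp [hc]
    · have hcne : ((grpC N Z X1 X0 true).card : ℝ) ≠ 0 := by positivity
      field_simp
  -- means of Y
  have hg1 : gmean N Z true (Yr N Z X1 X0 β U)
      = gmean N Z true U + TbetaA N Z X1 X0 β true
        + TbarC N Z X1 X0 true * betabarC N Z X1 X0 β true := by
    rw [gmean, gmean, TbetaA, ← hS1, hY1, ← hCterm, add_div, add_div]; ring
  have hg0 : gmean N Z false (Yr N Z X1 X0 β U)
      = gmean N Z false U + TbetaA N Z X1 X0 β false := by
    rw [gmean, gmean, TbetaA, ← hS0, hY0, add_div]; ring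
  refine ⟨?_, hconj2⟩
  rw [hg1, hg0, ← hconj2]
  have : gmean N Z true U + TbetaA N Z X1 X0 β true
        + TbarC N Z X1 X0 true * betabarC N Z X1 X0 β true
      - (gmean N Z false U + TbetaA N Z X1 X0 β false)
      = (gmean N Z true U - gmean N Z false U)
        + (TbetaA N Z X1 X0 β true - TbetaA N Z X1 X0 β false)
        + TbarC N Z X1 X0 true * betabarC N Z X1 X0 β true := by ring
  rw [this, add_div, add_div, mul_div_right_comm]
end

section
/- Finite-population LATT point identification: Under no defiers, relevance, and exact balance — Ū_{z=1} = Ū_{z=0}, T̄₁(a) = T̄₀(a), and T̄₁(a)β̄₁(a) = T̄₀(a)β̄₀(a) — the Wald estimand equals the realized local average treatment effect on treated compliers: (Ȳ_{z=1} − Ȳ_{z=0})/(X̄_{z=1} − X̄_{z=0}) = β̄₁(c), where β̄₁(c) is the mean of βᵢ over units with Zᵢ = 1 and Tᵢ = c. -/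
open Finset

lemma split1 (N : ℕ) (Z X1 X0 : Fin N → Bool) (A : Fin N → ℝ) :
    ∑ i ∈ grp N Z true, (if Xr N Z X1 X0 i then A i else 0)
      = (∑ i ∈ grpA N Z X1 X0 true, A i) + ∑ i ∈ grpC N Z X1 X0 true, A i := by
  classical
  have h1 : ∀ i ∈ grp N Z true, Z i = true := fun i hi => (Finset.mem_filter.mp hi).2
  calc ∑ i ∈ grp N Z true, (if Xr N Z X1 X0 i then A i else 0)
      = ∑ i ∈ grp N Z true, (if X1 i = true then A i else 0) := by
        refine Finset.sum_congr rfl fun i hi => ?_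
        simp [Xr, h1 i hi]
    _ = ∑ i ∈ (grp N Z true).filter (fun i => X1 i = true), A i :=
        (Finset.sum_filter _ _).symm
    _ = _ := by
        rw [← Finset.sum_filter_add_sum_filter_not
          ((grp N Z true).filter fun i => X1 i = true) (fun i => X0 i = true)]
        congr 1
        · rw [Finset.filter_filter]; rfl
        · rw [Finset.filter_filter]
          refine Finset.sum_congr ?_ (fun _ _ => rfl)
          refine Finset.filter_congr fun i _ => ?_
          simp [grpC]

lemma split0 (N : ℕ) (Z X1 X0 : Fin N → Bool)
    (hnodef : ∀ i, ¬(X1 i = false ∧ X0 i = true)) (A : Fin N → ℝ) :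
    ∑ i ∈ grp N Z false, (if Xr N Z X1 X0 i then A i else 0)
      = ∑ i ∈ grpA N Z X1 X0 false, A i := by
  classical
  have h0 : ∀ i ∈ grp N Z false, Z i = false := fun i hi => (Finset.mem_filter.mp hi).2
  calc ∑ i ∈ grp N Z false, (if Xr N Z X1 X0 i then A i else 0)
      = ∑ i ∈ grp N Z false, (if X0 i = true then A i else 0) := by
        refine Finset.sum_congr rfl fun i hi => ?_
        simp [Xr, h0 i hi]
    _ = ∑ i ∈ (grp N Z false).filter (fun i => X0 i = true), A i :=
        (Finset.sum_filter _ _).symm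
    _ = _ := by
        congr 1
        ext i
        simp only [grpA, grp, Finset.mem_filter, Finset.mem_univ, true_and]
        have hn := hnodef i
        cases hx : X1 i <;> simp [hx] at hn ⊢ <;> tauto

/-- finite-population LATT point identification: under no defiers,
relevance, and exact balance, the Wald estimand equals the mean treatment effect among
treated compliers (compliers with instrument on). -/
theorem statement15
    (N : ℕ) (Z X1 X0 : Fin N → Bool) (β U : Fin N → ℝ)
    (hN1 : 0 < (grp N Z true).card) (hN0 : 0 < (grp N Z false).card)
    (hnodef : ∀ i, ¬(X1 i = false ∧ X0 i = true))
    (hrel : Xbar N Z X1 X0 true ≠ Xbar N Z X1 X0 false)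
    (hbalU : gmean N Z true U = gmean N Z false U)
    (hbalA : TbarA N Z X1 X0 true = TbarA N Z X1 X0 false)
    (hbalβ : TbetaA N Z X1 X0 β true = TbetaA N Z X1 X0 β false) :
    (gmean N Z true (Yr N Z X1 X0 β U) - gmean N Z false (Yr N Z X1 X0 β U))
        / (Xbar N Z X1 X0 true - Xbar N Z X1 X0 false)
      = betabarC N Z X1 X0 β true := by
  classical
  have hn1 : ((grp N Z true).card : ℝ) ≠ 0 := Nat.cast_ne_zero.mpr hN1.ne'
  have hn0 : ((grp N Z false).card : ℝ) ≠ 0 := Nat.cast_ne_zero.mpr hN0.ne'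
  -- Xbar true
  have hX1 : Xbar N Z X1 X0 true
      = (((grpA N Z X1 X0 true).card : ℝ) + ((grpC N Z X1 X0 true).card : ℝ))
        / ((grp N Z true).card : ℝ) := by
    unfold Xbar gmean
    rw [show (fun i => if Xr N Z X1 X0 i then (1:ℝ) else 0)
        = (fun i => if Xr N Z X1 X0 i then (fun _ : Fin N => (1:ℝ)) i else 0) from rfl]
    rw [split1 N Z X1 X0 (fun _ => (1:ℝ))]
    simp
  have hX0 : Xbar N Z X1 X0 false
      = ((grpA N Z X1 X0 false).card : ℝ) / ((grp N Z false).card : ℝ) := by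
    unfold Xbar gmean
    rw [show (fun i => if Xr N Z X1 X0 i then (1:ℝ) else 0)
        = (fun i => if Xr N Z X1 X0 i then (fun _ : Fin N => (1:ℝ)) i else 0) from rfl]
    rw [split0 N Z X1 X0 hnodef (fun _ => (1:ℝ))]
    simp
  have hXdiff : Xbar N Z X1 X0 true - Xbar N Z X1 X0 false
      = ((grpC N Z X1 X0 true).card : ℝ) / ((grp N Z true).card : ℝ) := by
    have hA := hbalA
    unfold TbarA at hA
    rw [hX1, hX0, add_div, hA]
    ring
  have hc1 : ((grpC N Z X1 X0 true).card : ℝ) ≠ 0 := by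
    intro h
    apply hrel
    have : Xbar N Z X1 X0 true - Xbar N Z X1 X0 false = 0 := by
      rw [hXdiff, h]; simp
    linarith
  -- Y means
  have hY1 : gmean N Z true (Yr N Z X1 X0 β U)
      = ((∑ i ∈ grpA N Z X1 X0 true, β i) + (∑ i ∈ grpC N Z X1 X0 true, β i)
          + ∑ i ∈ grp N Z true, U i) / ((grp N Z true).card : ℝ) := by
    unfold gmean Yr
    rw [Finset.sum_add_distrib]
    have h : ∀ i, β i * (if Xr N Z X1 X0 i then (1:ℝ) else 0)
        = (if Xr N Z X1 X0 i then β i else 0) := fun i => by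
      by_cases h : Xr N Z X1 X0 i <;> simp [h]
    simp only [h]
    rw [split1 N Z X1 X0 β]
  have hY0 : gmean N Z false (Yr N Z X1 X0 β U)
      = ((∑ i ∈ grpA N Z X1 X0 false, β i)
          + ∑ i ∈ grp N Z false, U i) / ((grp N Z false).card : ℝ) := by
    unfold gmean Yr
    rw [Finset.sum_add_distrib]
    have h : ∀ i, β i * (if Xr N Z X1 X0 i then (1:ℝ) else 0)
        = (if Xr N Z X1 X0 i then β i else 0) := fun i => by
      by_cases h : Xr N Z X1 X0 i <;> simp [h]
    simp only [h]
    rw [split0 N Z X1 X0 hnodef β]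
  have hYdiff : gmean N Z true (Yr N Z X1 X0 β U) - gmean N Z false (Yr N Z X1 X0 β U)
      = (∑ i ∈ grpC N Z X1 X0 true, β i) / ((grp N Z true).card : ℝ) := by
    have hb := hbalβ
    unfold TbetaA at hb
    have hu := hbalU
    unfold gmean at hu
    rw [hY1, hY0, add_div, add_div, add_div, hb, hu]
    ring
  rw [hYdiff, hXdiff]
  unfold betabarC
  field_simp
end

section
/- One-sided noncompliance bounds: Assume no defiers, no always takers (Tᵢ ∉ {a, d} for all i), relevance, and |Ū_{z=1} − Ū_{z=0}| ≤ K for a known K ≥ 0. Then the realized LATT β̄₁(c) satisfies β̄₁(c) ∈ [W − K/π, W + K/π], where W = (Ȳ_{z=1} − Ȳ_{z=0})/(X̄_{z=1} − X̄_{z=0}) is the Wald estimand and π = X̄_{z=1} − X̄_{z=0} > 0. Moreover under one-sided noncompliance the decomposition simplifies to W = (Ū_{z=1} − Ū_{z=0})/π + β̄₁(c). -/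
open Finset

/-- one-sided noncompliance bounds on the realized LATT under
`K`-approximate mean balance of `Y(0)` across instrument groups. -/
theorem statement16
    (N : ℕ) (Z X1 X0 : Fin N → Bool) (β U : Fin N → ℝ)
    (hN1 : 0 < (grp N Z true).card) (hN0 : 0 < (grp N Z false).card)
    (honesided : ∀ i, X0 i = false)
    (hrel : Xbar N Z X1 X0 true ≠ Xbar N Z X1 X0 false)
    (K : ℝ) (hK : 0 ≤ K)
    (hbal : |gmean N Z true U - gmean N Z false U| ≤ K) :
    betabarC N Z X1 X0 β true
      ∈ Set.Icc
        ((gmean N Z true (Yr N Z X1 X0 β U) - gmean N Z false (Yr N Z X1 X0 β U))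
            / (Xbar N Z X1 X0 true - Xbar N Z X1 X0 false)
          - K / (Xbar N Z X1 X0 true - Xbar N Z X1 X0 false))
        ((gmean N Z true (Yr N Z X1 X0 β U) - gmean N Z false (Yr N Z X1 X0 β U))
            / (Xbar N Z X1 X0 true - Xbar N Z X1 X0 false)
          + K / (Xbar N Z X1 X0 true - Xbar N Z X1 X0 false))
    ∧ (gmean N Z true (Yr N Z X1 X0 β U) - gmean N Z false (Yr N Z X1 X0 β U))
        / (Xbar N Z X1 X0 true - Xbar N Z X1 X0 false)
      = (gmean N Z true U - gmean N Z false U)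
          / (Xbar N Z X1 X0 true - Xbar N Z X1 X0 false)
        + betabarC N Z X1 X0 β true := by
  classical
  have hXr0 : ∀ i ∈ grp N Z false, Xr N Z X1 X0 i = false := by
    intro i hi
    simp only [grp, mem_filter] at hi
    simp [Xr, hi.2, honesided i]
  have hXr1 : ∀ i ∈ grp N Z true, Xr N Z X1 X0 i = X1 i := by
    intro i hi
    simp only [grp, mem_filter] at hi
    simp [Xr, hi.2]
  have hgrpC : grpC N Z X1 X0 true = (grp N Z true).filter (fun i => X1 i = true) := by
    unfold grpC
    apply Finset.filter_congr
    intro i _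
    simp [honesided i]
  have hXbar0 : Xbar N Z X1 X0 false = 0 := by
    simp only [Xbar, gmean]
    rw [Finset.sum_eq_zero (fun i hi => by simp [hXr0 i hi])]
    simp
  set n1 : ℝ := ((grp N Z true).card : ℝ) with hn1def
  have hn1 : 0 < n1 := by rw [hn1def]; exact_mod_cast hN1
  set cC : ℝ := ((grpC N Z X1 X0 true).card : ℝ) with hcCdef
  have hXbar1 : Xbar N Z X1 X0 true = cC / n1 := by
    simp only [Xbar, gmean]
    have hs : (∑ i ∈ grp N Z true, (if Xr N Z X1 X0 i = true then (1:ℝ) else 0)) = cC := by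
      rw [hcCdef, hgrpC]
      trans (∑ i ∈ grp N Z true, (if X1 i = true then (1:ℝ) else 0))
      · exact Finset.sum_congr rfl (fun i hi => by simp [hXr1 i hi])
      · simp [Finset.sum_boole]
    rw [hs]
  have hπ : Xbar N Z X1 X0 true - Xbar N Z X1 X0 false = cC / n1 := by
    rw [hXbar0, hXbar1, sub_zero]
  have hcC0 : cC ≠ 0 := by
    intro h
    apply hrel
    rw [hXbar0, hXbar1, h, zero_div]
  have hcC : 0 < cC := lt_of_le_of_ne (by positivity) (Ne.symm hcC0)
  have hπpos : 0 < Xbar N Z X1 X0 true - Xbar N Z X1 X0 false := by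
    rw [hπ]; positivity
  have hY0 : gmean N Z false (Yr N Z X1 X0 β U) = gmean N Z false U := by
    simp only [gmean, Yr]
    congr 1
    apply Finset.sum_congr rfl
    intro i hi
    simp [hXr0 i hi]
  set S : ℝ := ∑ i ∈ grpC N Z X1 X0 true, β i with hSdef
  have hY1 : gmean N Z true (Yr N Z X1 X0 β U) = S / n1 + gmean N Z true U := by
    simp only [gmean, Yr]
    have hs : (∑ i ∈ grp N Z true,
        (β i * (if Xr N Z X1 X0 i then (1:ℝ) else 0) + U i))
        = S + ∑ i ∈ grp N Z true, U i := by
      rw [Finset.sum_add_distrib]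
      congr 1
      rw [hSdef, hgrpC, Finset.sum_filter]
      exact Finset.sum_congr rfl (fun i hi => by
        rw [hXr1 i hi]; by_cases h : X1 i <;> simp [h])
    rw [hs, add_div]
  have hbeta : betabarC N Z X1 X0 β true = S / cC := rfl
  set u1 : ℝ := gmean N Z true U
  set u0 : ℝ := gmean N Z false U
  have hdec : (gmean N Z true (Yr N Z X1 X0 β U) - gmean N Z false (Yr N Z X1 X0 β U))
        / (Xbar N Z X1 X0 true - Xbar N Z X1 X0 false)
      = (u1 - u0) / (Xbar N Z X1 X0 true - Xbar N Z X1 X0 false)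
        + betabarC N Z X1 X0 β true := by
    rw [hY0, hY1, hπ, hbeta]
    field_simp
    ring
  have hub : (u1 - u0) / (Xbar N Z X1 X0 true - Xbar N Z X1 X0 false)
      ≤ K / (Xbar N Z X1 X0 true - Xbar N Z X1 X0 false) :=
    (div_le_div_iff_of_pos_right hπpos).mpr (le_of_abs_le hbal)
  have hlb : (-K) / (Xbar N Z X1 X0 true - Xbar N Z X1 X0 false)
      ≤ (u1 - u0) / (Xbar N Z X1 X0 true - Xbar N Z X1 X0 false) :=
    (div_le_div_iff_of_pos_right hπpos).mpr (neg_le_of_abs_le hbal)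
  rw [neg_div] at hlb
  exact ⟨⟨by rw [hdec]; linarith, by rw [hdec]; linarith⟩, hdec⟩
end
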